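/- arXiv:2207.11870 — 3 statements merged into one kernel-verified Lean document; each statement's English description precedes it below -/
import Mathlib

section
/- For each integer n ≥ 2, there exists an almost ι_K-local map from the trivial complex C_O to C_n, but there is no almost ι_K-local map from C_n to C_O; consequently [C_O] < [C_n] in 𝔗^U_K, i.e., [C_O] ≤ [C_n] and [C_O] ≠ [C_n]. -/
/-!
Algebraic model for horizontal almost `ι_K`-complexes (Kang–Park,
"Torsion in the knot concordance group and cabling").

Conventions.  We work over `F₂ = ℤ/2`.  A bigraded chain complex of finitely
generated free `F₂[U]`-modules is presented by a finite homogeneous basis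
`idx`, a bidegree function `gr : idx → ℤ × ℤ` (Alexander and Maslov gradings),
and a differential matrix `d` over `F₂[U]` (the `j`-th basis vector is sent to
`∑ i, d i j • eᵢ`; matrix multiplication is composition).  The variable `U`
has bidegree `(−1, −2)` and the differential has bidegree `(0, −1)`.
-/

open Polynomial Matrix Kronecker

noncomputable section

/-- The field with two elements. -/
abbrev F2 : Type := ZMod 2

/-- The ring `F₂[U]`. -/
abbrev PolyU : Type := Polynomial F2

/-- The ring `F₂[U, U⁻¹]`. -/
abbrev Laur : Type := LaurentPolynomial F2

/-- The localization map `F₂[U] → F₂[U, U⁻¹]`. -/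
def toL : PolyU →+* Laur := Polynomial.toLaurent

/-- The skew of a bidegree: `(A, M) ↦ (−A, M)`. -/
def skew (p : ℤ × ℤ) : ℤ × ℤ := (-p.1, p.2)

/-- Data of a bigraded complex of finitely generated free `F₂[U]`-modules. -/
structure CxData where
  idx : Type
  [fintype_idx : Fintype idx]
  [dec_idx : DecidableEq idx]
  gr : idx → ℤ × ℤ
  d : Matrix idx idx PolyU

attribute [instance] CxData.fintype_idx CxData.dec_idx

/-- The `U = 0` (hat-flavored) truncation of a matrix over `F₂[U]`. -/
def hatM {m n : Type} (f : Matrix m n PolyU) : Matrix m n F2 :=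
  fun i j => (f i j).coeff 0

/-- `f` is a homogeneous `F₂[U]`-linear map of bidegree `δ` from `C` to `D`:
a monomial `U^k` appearing in the entry `(i, j)` forces
`gr i + k • (−1, −2) = gr j + δ`. -/
def GradedMap (C D : CxData) (δ : ℤ × ℤ) (f : Matrix D.idx C.idx PolyU) : Prop :=
  ∀ (i : D.idx) (j : C.idx) (k : ℕ), (f i j).coeff k ≠ 0 →
    D.gr i + (-(k : ℤ), -2 * (k : ℤ)) = C.gr j + δ

/-- An element (column vector) of `C` is homogeneous of bidegree `δ`. -/
def Homog (C : CxData) (δ : ℤ × ℤ) (v : Matrix C.idx Unit PolyU) : Prop :=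
  ∀ (i : C.idx) (k : ℕ), (v i ()).coeff k ≠ 0 →
    C.gr i + (-(k : ℤ), -2 * (k : ℤ)) = δ

namespace CxData

/-- `C` is a bigraded chain complex: `∂² = 0` and `∂` has bidegree `(0, −1)`. -/
def IsComplex (C : CxData) : Prop :=
  C.d * C.d = 0 ∧ GradedMap C C (0, -1) C.d

/-- The formal derivative `Φ` of the differential with respect to `U`. -/
def Phi (C : CxData) : Matrix C.idx C.idx PolyU :=
  fun i j => derivative (C.d i j)

/-- The induced differential on the truncation `Ĉ = C/UC`. -/
def dHat (C : CxData) : Matrix C.idx C.idx F2 := hatM C.d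

/-- The truncation of `Φ` to `Ĉ`. -/
def PhiHat (C : CxData) : Matrix C.idx C.idx F2 := hatM C.Phi

/-- The localized differential, over `F₂[U, U⁻¹]`. -/
def dL (C : CxData) : Matrix C.idx C.idx Laur := C.d.map toL

end CxData

/-- Chain homotopy (everything is mod 2) between maps `Ĉ → D̂` of truncations. -/
def HatHomotopic (C D : CxData) (f g : Matrix D.idx C.idx F2) : Prop :=
  ∃ H : Matrix D.idx C.idx F2, f + g = D.dHat * H + H * C.dHat

/-- Chain homotopy between maps `C → D` over `F₂[U]`. -/
def Homotopic (C D : CxData) (f g : Matrix D.idx C.idx PolyU) : Prop :=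
  ∃ H : Matrix D.idx C.idx PolyU, f + g = D.d * H + H * C.d

/-- Chain homotopy between maps `U⁻¹C → U⁻¹D` over `F₂[U, U⁻¹]`. -/
def LHomotopic (C D : CxData) (f g : Matrix D.idx C.idx Laur) : Prop :=
  ∃ H : Matrix D.idx C.idx Laur, f + g = D.dL * H + H * C.dL

/-- A matrix on the truncation `Ĉ` is skew-graded: each nonzero entry takes
bidegree `(A, M)` to `(−A, M)`. -/
def SkewGraded (C : CxData) (f : Matrix C.idx C.idx F2) : Prop :=
  ∀ i j, f i j ≠ 0 → C.gr i = skew (C.gr j)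

/-- `f` is a chain homotopy equivalence of the truncation `Ĉ`. -/
def HatHomotopyEquiv (C : CxData) (f : Matrix C.idx C.idx F2) : Prop :=
  f * C.dHat = C.dHat * f ∧
  ∃ g : Matrix C.idx C.idx F2, g * C.dHat = C.dHat * g ∧
    HatHomotopic C C (g * f) 1 ∧ HatHomotopic C C (f * g) 1

/-- The localization `U⁻¹C` is chain homotopy equivalent to `F₂[U, U⁻¹]`
(one generator, zero differential). -/
def LocalizationTrivial (C : CxData) : Prop :=
  ∃ (f : Matrix Unit C.idx Laur) (g : Matrix C.idx Unit Laur),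
    f * C.dL = 0 ∧ C.dL * g = 0 ∧ f * g = 1 ∧
    ∃ H : Matrix C.idx C.idx Laur, 1 + g * f = C.dL * H + H * C.dL

/-- The homology class of the cycle `x` generates the homology of `U⁻¹C`:
the chain map `F₂[U,U⁻¹] → U⁻¹C` sending the generator to `x` is a chain
homotopy equivalence. -/
def GeneratesLocalHomology (C : CxData) (x : Matrix C.idx Unit PolyU) : Prop :=
  C.dL * x.map toL = 0 ∧
  ∃ p : Matrix Unit C.idx Laur, p * C.dL = 0 ∧ p * x.map toL = 1 ∧
    ∃ H : Matrix C.idx C.idx Laur, 1 + x.map toL * p = C.dL * H + H * C.dL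

/-- A pair as in Definition 2.4: a complex together with an involution of the
hat-flavored truncation. -/
structure Hor where
  C : CxData
  iota : Matrix C.idx C.idx F2

/-- `(C, ι)` is a horizontal almost `ι_K`-complex. -/
def IsHorizontal (X : Hor) : Prop :=
  X.C.IsComplex ∧
  LocalizationTrivial X.C ∧
  HatHomotopyEquiv X.C X.iota ∧
  SkewGraded X.C X.iota ∧
  HatHomotopic X.C X.C (X.C.PhiHat * X.iota * X.C.PhiHat * X.iota)
    (X.iota * X.C.PhiHat * X.iota * X.C.PhiHat) ∧
  HatHomotopic X.C X.C (X.iota * X.iota)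
    (1 + X.C.PhiHat * X.iota * X.C.PhiHat * X.iota) ∧
  ∃ f : Matrix X.C.idx X.C.idx PolyU, f * X.C.d = X.C.d * f ∧
    HatHomotopic X.C X.C (hatM f) (X.iota * X.C.PhiHat * X.iota)

/-- The localization `U⁻¹f` of `f` is a chain homotopy equivalence. -/
def LocalizedHomotopyEquiv (C D : CxData) (f : Matrix D.idx C.idx PolyU) : Prop :=
  ∃ g : Matrix C.idx D.idx Laur,
    g * D.dL = C.dL * g ∧
    LHomotopic C C (g * f.map toL) 1 ∧
    LHomotopic D D (f.map toL * g) 1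

/-- An almost `ι_K`-local map from `(C, ι_C)` to `(D, ι_D)`: a bidegree
preserving `F₂[U]`-linear chain map whose localization is a chain homotopy
equivalence and whose truncation homotopy-commutes with the involutions. -/
def AlmostLocalMap (X Y : Hor) (f : Matrix Y.C.idx X.C.idx PolyU) : Prop :=
  GradedMap X.C Y.C (0, 0) f ∧
  f * X.C.d = Y.C.d * f ∧
  LocalizedHomotopyEquiv X.C Y.C f ∧
  HatHomotopic X.C Y.C (Y.iota * hatM f) (hatM f * X.iota)

/-- `X ≤ Y`: there is an almost `ι_K`-local map from `X` to `Y`. -/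
def Le (X Y : Hor) : Prop := ∃ f, AlmostLocalMap X Y f

/-- Almost `ι_K`-local equivalence. -/
def AlmostLocalEquiv (X Y : Hor) : Prop := Le X Y ∧ Le Y X

/-- The tensor product over `F₂[U]` of two complexes. -/
def tensorCx (C D : CxData) : CxData where
  idx := C.idx × D.idx
  gr := fun p => C.gr p.1 + D.gr p.2
  d := C.d ⊗ₖ (1 : Matrix D.idx D.idx PolyU) + (1 : Matrix C.idx C.idx PolyU) ⊗ₖ D.d

/-- The tensor product of pairs, with `ι_{C⊗D} = ι_C ⊗ ι_D + Φι_C ⊗ ι_D Φ`. -/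
def tensorHor (X Y : Hor) : Hor where
  C := tensorCx X.C Y.C
  iota := X.iota ⊗ₖ Y.iota + (X.C.PhiHat * X.iota) ⊗ₖ (Y.iota * Y.C.PhiHat)

/-- The trivial complex `C_O = F₂[U]`, generator in bidegree `(0,0)`, zero
differential, identity involution. -/
def CO : Hor where
  C := { idx := Unit, gr := fun _ => (0, 0), d := 0 }
  iota := 1

/-- The complex `C_E` of the figure-eight knot: generators `a, b, c, d, x`
(indices `0, 1, 2, 3, 4`), with `a, x` in bidegree `(0,0)`, differential
`∂a = Ub`, `∂c = Ud`, `∂b = ∂d = ∂x = 0`, and involution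
`ι(a) = a + x`, `ι(b) = c`, `ι(c) = b`, `ι(d) = d`, `ι(x) = x + d`. -/
def CE : Hor where
  C := { idx := Fin 5
         gr := ![(0, 0), (1, 1), (-1, 1), (0, 2), (0, 0)]
         d := !![0, 0, 0, 0, 0;
                 Polynomial.X, 0, 0, 0, 0;
                 0, 0, 0, 0, 0;
                 0, 0, Polynomial.X, 0, 0;
                 0, 0, 0, 0, 0] }
  iota := !![1, 0, 0, 0, 0;
             0, 0, 1, 0, 0;
             0, 1, 0, 0, 0;
             0, 0, 0, 1, 1;
             1, 0, 0, 0, 1]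

/-- The complex `C_n`: generators `a_n, b_n, c_n, d_n, x_n` (indices
`0, …, 4`), `a_n, x_n` in bidegree `(0,0)`, differential `∂a_n = Uⁿ b_n`,
`∂c_n = Uⁿ d_n`, and involution `ι(a_n) = a_n + x_n`, `ι(b_n) = c_n`,
`ι(c_n) = b_n`, `ι(d_n) = d_n`, `ι(x_n) = x_n`. -/
def Cn (n : ℕ) : Hor where
  C := { idx := Fin 5
         gr := ![(0, 0), ((n : ℤ), 2 * (n : ℤ) - 1), (-(n : ℤ), 2 * (n : ℤ) - 1),
                 (0, 4 * (n : ℤ) - 2), (0, 0)]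
         d := !![0, 0, 0, 0, 0;
                 Polynomial.X ^ n, 0, 0, 0, 0;
                 0, 0, 0, 0, 0;
                 0, 0, Polynomial.X ^ n, 0, 0;
                 0, 0, 0, 0, 0] }
  iota := !![1, 0, 0, 0, 0;
             0, 0, 1, 0, 0;
             0, 1, 0, 0, 0;
             0, 0, 0, 1, 0;
             1, 0, 0, 0, 1]

/-- The dual complex `C* = Hom_{F₂[U]}(C, F₂[U])`: dual basis, negated
gradings, transposed differential. -/
def dualCx (C : CxData) : CxData where
  idx := C.idx
  gr := fun i => -C.gr i
  d := C.dᵀ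

/-- The dual pair `(C*, ι*)`. -/
def dualHor (X : Hor) : Hor where
  C := dualCx X.C
  iota := X.iotaᵀ

/-- `n`-fold tensor power (`0` gives the trivial complex `C_O`). -/
def tensorPow (X : Hor) : ℕ → Hor
  | 0 => CO
  | n + 1 => tensorHor (tensorPow X n) X

/-- The trace map `tr : C ⊗ C* → F₂[U]`. -/
def trMap (C : CxData) : Matrix Unit (C.idx × C.idx) PolyU :=
  fun _ p => if p.1 = p.2 then 1 else 0

/-- The cotrace map `cotr : F₂[U] → C ⊗ C*`. -/
def cotrMap (C : CxData) : Matrix (C.idx × C.idx) Unit PolyU :=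
  fun p _ => if p.1 = p.2 then 1 else 0

/-!
The generator `x_n` is a cycle fixed by `ι` that generates the localized homology, so sending
the generator of `C_O` to it is an almost `ι_K`-local map. Conversely, a local map
`f : C_n → C_O` has to take a cycle of `U⁻¹C_n` to `1`. Gradings force `f` to vanish on
`b_n, c_n, d_n` and to be constant on `x_n`; since every differential of `C_n` is divisible by
`U`, the hat-flavored truncation has zero differential, so `ι`-equivariance holds on the nose,
and `ι(a_n) = a_n + x_n` then kills `f(x_n)`. Finally, a cycle of `U⁻¹C_n` has no `a_n`
component because `∂a_n = Uⁿ b_n` and `U` is invertible, so `f` sends every cycle to `0`.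
-/

instance : CharP Laur 2 := charP_of_injective_algebraMap (algebraMap F2 Laur).injective 2

section Homotopy

variable {C D : CxData}

theorem HatHomotopic.refl (f : Matrix D.idx C.idx F2) : HatHomotopic C D f f :=
  ⟨0, by ext i j; simp [CharTwo.add_self_eq_zero]⟩

theorem LHomotopic.refl (f : Matrix D.idx C.idx Laur) : LHomotopic C D f f :=
  ⟨0, by ext i j : 1; simp [CharTwo.add_self_eq_zero]⟩

theorem HatHomotopic.eq_of_dHat_eq_zero (hC : C.dHat = 0) (hD : D.dHat = 0)
    {f g : Matrix D.idx C.idx F2} (h : HatHomotopic C D f g) : f = g := by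
  obtain ⟨H, hH⟩ := h
  rw [hC, hD, Matrix.zero_mul, Matrix.mul_zero, add_zero] at hH
  exact Matrix.ext fun i j => CharTwo.add_eq_zero.mp (congrFun (congrFun hH i) j)

theorem LHomotopic.eq_of_dL_eq_zero (hC : C.dL = 0) (hD : D.dL = 0)
    {f g : Matrix D.idx C.idx Laur} (h : LHomotopic C D f g) : f = g := by
  obtain ⟨H, hH⟩ := h
  rw [hC, hD, Matrix.zero_mul, Matrix.mul_zero, add_zero] at hH
  exact Matrix.ext fun i j => CharTwo.add_eq_zero.mp (congrFun (congrFun hH i) j)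

end Homotopy

section Graded

variable {C D : CxData} {δ : ℤ × ℤ} {f : Matrix D.idx C.idx PolyU} {i : D.idx} {j : C.idx}

theorem GradedMap.apply_eq_zero (hf : GradedMap C D δ f)
    (h : ∀ k : ℕ, D.gr i + (-(k : ℤ), -2 * (k : ℤ)) ≠ C.gr j + δ) : f i j = 0 := by
  ext k
  by_contra hk
  exact h k (hf i j k hk)

theorem GradedMap.apply_eq_C (hf : GradedMap C D δ f)
    (h : ∀ k : ℕ, D.gr i + (-(k : ℤ), -2 * (k : ℤ)) = C.gr j + δ → k = 0) :
    f i j = Polynomial.C ((f i j).coeff 0) := by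
  ext k
  rcases eq_or_ne k 0 with rfl | hk
  · simp
  · rw [Polynomial.coeff_C, if_neg hk]
    by_contra hne
    exact hk (h k (hf i j k hne))

end Graded

theorem CO_dHat : CO.C.dHat = 0 := by
  ext i j; exact Polynomial.coeff_zero 0

theorem CO_dL : CO.C.dL = 0 :=
  Matrix.map_zero _ toL.map_zero

theorem CO_le_of_generatesLocalHomology {X : Hor} {x : Matrix X.C.idx Unit PolyU}
    (hx : Homog X.C (0, 0) x) (hgen : GeneratesLocalHomology X.C x)
    (hι : X.iota * hatM x = hatM x) : Le CO X := by
  obtain ⟨hcyc, p, hp, hpx, H, hH⟩ := hgen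
  have hdx : X.C.d * x = 0 := by
    refine Matrix.map_injective (f := toL) Polynomial.toLaurent_injective ?_
    simp only [Matrix.map_mul, Matrix.map_zero _ toL.map_zero]
    exact hcyc
  refine ⟨x, fun i j k hk => ?_, ?_, ⟨p, ?_, ?_, H, ?_⟩, ?_⟩
  · rw [hx i k hk]; rfl
  · change x * (0 : Matrix Unit Unit PolyU) = X.C.d * x
    rw [Matrix.mul_zero, hdx]
  · change p * X.C.dL = (0 : Matrix Unit Unit PolyU).map toL * p
    rw [Matrix.map_zero _ toL.map_zero, Matrix.zero_mul, hp]
  · change LHomotopic CO.C CO.C (p * x.map toL) 1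
    rw [hpx]
    exact LHomotopic.refl 1
  · rw [add_comm]; exact hH
  · have hx1 : hatM x * (1 : Matrix Unit Unit F2) = hatM x := Matrix.mul_one _
    change HatHomotopic CO.C X.C (X.iota * hatM x) (hatM x * (1 : Matrix Unit Unit F2))
    rw [hι, hx1]
    exact HatHomotopic.refl _

theorem exists_cycle_of_localizedHomotopyEquiv_CO {C : CxData}
    {f : Matrix CO.C.idx C.idx PolyU} (hf : LocalizedHomotopyEquiv C CO.C f) :
    ∃ z : Matrix C.idx CO.C.idx Laur, C.dL * z = 0 ∧ f.map toL * z = 1 := by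
  obtain ⟨g, hg, -, hfg⟩ := hf
  refine ⟨g, ?_, hfg.eq_of_dL_eq_zero CO_dL CO_dL⟩
  rw [← hg, CO_dL, Matrix.mul_zero]

section Cn

variable {n : ℕ}

/- The differential and involution of `C_n` retyped over `Fin 5`, so that the generators
`a_n, b_n, c_n, d_n, x_n` can be named by the numerals `0, …, 4` in matrix products. -/
def dCn (n : ℕ) : Matrix (Fin 5) (Fin 5) PolyU := (Cn n).C.d

def iotaCn (n : ℕ) : Matrix (Fin 5) (Fin 5) F2 := (Cn n).iota

theorem Cn_dHat (hn : n ≠ 0) : (Cn n).C.dHat = 0 := by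
  ext i j
  change ((Cn n).C.d i j).coeff 0 = 0
  fin_cases i <;> fin_cases j <;> simp [Cn, Polynomial.coeff_X_pow, Ne.symm hn]

def xGen : Matrix (Fin 5) Unit PolyU := Matrix.single 4 () 1

def xGenDual : Matrix Unit (Fin 5) Laur := Matrix.single () 4 1

/-- Inverts `∂` on the acyclic summand spanned by `a_n, b_n, c_n, d_n`. -/
def contractionCn (n : ℕ) : Matrix (Fin 5) (Fin 5) Laur :=
  Matrix.single 0 1 (LaurentPolynomial.T (-n)) + Matrix.single 2 3 (LaurentPolynomial.T (-n))

theorem homog_xGen : Homog (Cn n).C (0, 0) xGen := by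
  intro i k hk
  fin_cases i <;> simp_all [xGen, Cn, Polynomial.coeff_one]

theorem generatesLocalHomology_xGen : GeneratesLocalHomology (Cn n).C xGen := by
  refine ⟨?_, xGenDual, ?_, ?_, contractionCn n, ?_⟩
  · change (dCn n).map toL * xGen.map toL = 0
    ext i j : 1
    fin_cases i <;> simp [dCn, Cn, xGen, Matrix.mul_apply, Fin.sum_univ_five]
  · change xGenDual * (dCn n).map toL = 0
    ext i j : 1
    fin_cases j <;> simp [dCn, Cn, xGenDual, Matrix.mul_apply, Fin.sum_univ_five]
  · change xGenDual * xGen.map toL = (1 : Matrix Unit Unit Laur)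
    ext i j : 1
    simp [xGen, xGenDual, Matrix.mul_apply, Fin.sum_univ_five, toL]
  · change (1 : Matrix (Fin 5) (Fin 5) Laur) + xGen.map toL * xGenDual =
      (dCn n).map toL * contractionCn n + contractionCn n * (dCn n).map toL
    ext i j : 1
    have hT : LaurentPolynomial.T (n : ℤ) * LaurentPolynomial.T (-n) = (1 : Laur) := by
      rw [← LaurentPolynomial.T_add, add_neg_cancel, LaurentPolynomial.T_zero]
    simp only [dCn, Cn, xGen, xGenDual, contractionCn, Matrix.mul_apply, Fin.sum_univ_five,
      Matrix.add_apply, Matrix.map_apply]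
    fin_cases i <;> fin_cases j <;> simp [toL, hT, CharTwo.add_self_eq_zero]

theorem iotaCn_mul_hatM_xGen : iotaCn n * hatM xGen = hatM xGen := by
  ext i j
  fin_cases i <;> simp [iotaCn, Cn, hatM, xGen, Matrix.mul_apply, Fin.sum_univ_five]

theorem CO_le_Cn (n : ℕ) : Le CO (Cn n) :=
  CO_le_of_generatesLocalHomology homog_xGen generatesLocalHomology_xGen iotaCn_mul_hatM_xGen

theorem Cn_cycle_apply_zero {z : Matrix (Fin 5) Unit Laur} (hz : (dCn n).map toL * z = 0) :
    z 0 () = 0 := by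
  have hb := congrFun (congrFun hz 1) ()
  simpa [dCn, Cn, toL, Matrix.mul_apply, Fin.sum_univ_five,
    (LaurentPolynomial.isUnit_T (n : ℤ)).ne_zero] using hb

theorem AlmostLocalMap.Cn_CO_apply_eq_zero (hn : n ≠ 0) {f : Matrix Unit (Fin 5) PolyU}
    (hf : AlmostLocalMap (Cn n) CO f) :
    f () 1 = 0 ∧ f () 2 = 0 ∧ f () 3 = 0 ∧ f () 4 = 0 := by
  obtain ⟨hgr, -, -, hι⟩ := hf
  have hfix := hι.eq_of_dHat_eq_zero (Cn_dHat hn) CO_dHat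
  change (1 : Matrix Unit Unit F2) * hatM f = hatM f * iotaCn n at hfix
  rw [Matrix.one_mul] at hfix
  have hx : (f () 4).coeff 0 = 0 := by
    have ha := congrFun (congrFun hfix ()) 0
    simpa [iotaCn, Cn, hatM, Matrix.mul_apply, Fin.sum_univ_five] using ha
  have hxC := hgr.apply_eq_C (i := ()) (j := (4 : Fin 5)) fun k h => by simp [Cn, CO] at h; omega
  refine ⟨?_, ?_, ?_, by rw [hxC, hx, map_zero]⟩ <;>
    exact hgr.apply_eq_zero fun k => by simp [Cn, CO]; omega

theorem not_le_Cn_CO (hn : n ≠ 0) : ¬ Le (Cn n) CO := by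
  rintro ⟨f, hf⟩
  obtain ⟨z, hz, hfz⟩ := exists_cycle_of_localizedHomotopyEquiv_CO hf.2.2.1
  change Matrix Unit (Fin 5) PolyU at f
  change Matrix (Fin 5) Unit Laur at z
  change f.map toL * z = (1 : Matrix Unit Unit Laur) at hfz
  obtain ⟨hb, hc, hd, hx⟩ := hf.Cn_CO_apply_eq_zero hn
  have ha := Cn_cycle_apply_zero hz
  have hfz1 := congrFun (congrFun hfz ()) ()
  simp [Matrix.mul_apply, Fin.sum_univ_five, ha, hb, hc, hd, hx] at hfz1

end Cn

/-- For each `n ≥ 2` there exists an almost `ι_K`-local map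
from the trivial complex `C_O` to `C_n`, but there is no almost `ι_K`-local
map from `C_n` to `C_O`; consequently `[C_O] < [C_n]` in `𝔗^U_K`, i.e.
`[C_O] ≤ [C_n]` and `[C_O] ≠ [C_n]`. -/
theorem CO_lt_Cn (n : ℕ) (hn : 2 ≤ n) :
    (∃ f, AlmostLocalMap CO (Cn n) f) ∧
    (¬ ∃ f, AlmostLocalMap (Cn n) CO f) ∧
    Le CO (Cn n) ∧ ¬ AlmostLocalEquiv CO (Cn n) := by
  have hle : Le CO (Cn n) := CO_le_Cn n
  have hnot : ¬ Le (Cn n) CO := not_le_Cn_CO (by omega)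
  exact ⟨hle, hnot, hle, fun h => hnot h.2⟩

end
end

section
/- Let C be a bigraded chain complex of finitely generated free modules over F₂[U,V], and let ι : C → C be a skew-graded chain homotopy equivalence that is F₂[U,V]-skew-linear (ι(U·m) = V·ι(m) and ι(V·m) = U·ι(m)). Let Φ and Ψ denote the formal derivatives of the differential of C with respect to U and V respectively (chain maps, well defined up to homotopy). If Φι ≃ ιΨ and ι² ≃ id + ΦΨ up to chain homotopy, then Ψ ≃ ιΦι up to chain homotopy. -/
/-!
**Statement 16.**  Complexes over `F₂[U,V]` and the identity `Ψ ≃ ιΦι`.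

A bigraded chain complex of finitely generated free `F₂[U,V]`-modules is
presented by a finite homogeneous basis `idx` with bidegrees `gr` and a
differential matrix `d` over `F₂[U,V]` (columns map to columns; matrix
multiplication is composition).  The variable `U = X 0` has bidegree
`(−1,−2)` and `V = X 1` has bidegree `(1,−2)`; the differential has bidegree
`(0,−1)`.  An `F₂[U,V]`-skew-linear map `ι` (i.e. `ι(U·m) = V·ι(m)` and
`ι(V·m) = U·ι(m)`) is recorded by a matrix `ι` acting by
`v ↦ ι · (UVswap v)`, where `UVswap` exchanges the two variables. -/

open Matrix

noncomputable section

/-- The ring `F₂[U, V]`. -/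
abbrev PolyUV : Type := MvPolynomial (Fin 2) F2

/-- The ring involution of `F₂[U,V]` exchanging `U` and `V`. -/
def UVswap : PolyUV → PolyUV :=
  fun p => MvPolynomial.rename (Equiv.swap (0 : Fin 2) 1) p

/-- Data of a bigraded complex of finitely generated free `F₂[U,V]`-modules. -/
structure UVCx where
  idx : Type
  [fintype_idx : Fintype idx]
  [dec_idx : DecidableEq idx]
  gr : idx → ℤ × ℤ
  d : Matrix idx idx PolyUV

attribute [instance] UVCx.fintype_idx UVCx.dec_idx

/-- The coefficient of the monomial `U^k V^l`. -/
def uvCoeff (k l : ℕ) (p : PolyUV) : F2 :=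
  MvPolynomial.coeff (Finsupp.single 0 k + Finsupp.single 1 l) p

/-- A matrix over `F₂[U,V]` is homogeneous of bidegree `δ`. -/
def UVGraded (C : UVCx) (δ : ℤ × ℤ) (f : Matrix C.idx C.idx PolyUV) : Prop :=
  ∀ (i j : C.idx) (k l : ℕ), uvCoeff k l (f i j) ≠ 0 →
    C.gr i + (-(k : ℤ) + (l : ℤ), -2 * (k : ℤ) - 2 * (l : ℤ)) = C.gr j + δ

/-- A matrix over `F₂[U,V]` is skew-graded: nonzero terms relate bidegree
`(A, M)` to `(−A, M)`. -/
def UVSkewGraded (C : UVCx) (f : Matrix C.idx C.idx PolyUV) : Prop :=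
  ∀ (i j : C.idx) (k l : ℕ), uvCoeff k l (f i j) ≠ 0 →
    C.gr i + (-(k : ℤ) + (l : ℤ), -2 * (k : ℤ) - 2 * (l : ℤ)) = skew (C.gr j)

/-- `Φ`, the formal derivative of the differential with respect to `U`,
computed entrywise in the chosen basis. -/
def UVPhi (C : UVCx) : Matrix C.idx C.idx PolyUV :=
  fun i j => MvPolynomial.pderiv (0 : Fin 2) (C.d i j)

/-- `Ψ`, the formal derivative of the differential with respect to `V`. -/
def UVPsi (C : UVCx) : Matrix C.idx C.idx PolyUV :=
  fun i j => MvPolynomial.pderiv (1 : Fin 2) (C.d i j)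

/-- Chain homotopy between `F₂[U,V]`-linear chain maps. -/
def UVHomotopic (C : UVCx) (f g : Matrix C.idx C.idx PolyUV) : Prop :=
  ∃ H : Matrix C.idx C.idx PolyUV, f + g = C.d * H + H * C.d

/-- Chain homotopy between skew-linear chain maps (the homotopy is itself
skew-linear, recorded by a matrix acting through `UVswap`). -/
def UVSkewHomotopic (C : UVCx) (f g : Matrix C.idx C.idx PolyUV) : Prop :=
  ∃ H : Matrix C.idx C.idx PolyUV, f + g = C.d * H + H * C.d.map UVswap

/-!
Applying the skew-linear chain map `ι` to the skew homotopy `Φι ≃ ιΨ` gives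
`ιΦι ≃ ι²Ψ ≃ (1 + ΦΨ)Ψ = Ψ + ΦΨ²`, so it remains to see that `Ψ²` is null-homotopic.
Expanding `∂(U, V + t)² = 0` in powers of `t`, the coefficient of `t` says that `Ψ`
commutes with `∂` (up to sign), and the coefficient of `t²` reads `∂∂₂ + Ψ² + ∂₂∂ = 0`,
where `∂₂` is the divided second derivative of `∂` in `V` (the coefficient of `t²`),
which makes sense over `F₂` although `∂''/2` does not.
-/

namespace MvPolynomial

variable {R σ : Type*} [CommRing R] [DecidableEq σ]

def taylorVar (i : σ) : MvPolynomial σ R →ₐ[R] Polynomial (MvPolynomial σ R) :=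
  aeval fun j => Polynomial.C (X j) + if j = i then Polynomial.X else 0

theorem taylorVar_X (i j : σ) :
    taylorVar (R := R) i (X j) = Polynomial.C (X j) + if j = i then Polynomial.X else 0 :=
  aeval_X _ j

theorem taylorVar_coeff_zero (i : σ) (p : MvPolynomial σ R) :
    (taylorVar i p).coeff 0 = p := by
  induction p using MvPolynomial.induction_on with
  | C a => simp [taylorVar, MvPolynomial.algebraMap_eq]
  | add p q hp hq => simp [hp, hq]
  | mul_X p j h =>
    rw [map_mul, Polynomial.mul_coeff_zero, h, taylorVar_X]
    split_ifs <;> simp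

theorem taylorVar_coeff_one (i : σ) (p : MvPolynomial σ R) :
    (taylorVar i p).coeff 1 = pderiv i p := by
  induction p using MvPolynomial.induction_on with
  | C a => simp [taylorVar, MvPolynomial.algebraMap_eq]
  | add p q hp hq => simp [hp, hq]
  | mul_X p j h =>
    rw [map_mul, Polynomial.coeff_mul, Finset.Nat.antidiagonal_succ, Finset.sum_cons,
      Finset.Nat.antidiagonal_zero, Finset.map_singleton, Finset.sum_singleton, taylorVar_X]
    split_ifs with hj
    · subst hj; simp [taylorVar_coeff_zero, h, pderiv_X, mul_comm]
    · simp [taylorVar_coeff_zero, h, pderiv_X, hj, mul_comm]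

end MvPolynomial

namespace Matrix

theorem charTwo_add_self_eq_zero {m n R : Type*} [Ring R] [CharP R 2] (A : Matrix m n R) :
    A + A = 0 := by
  ext
  exact CharTwo.add_self_eq_zero _

theorem charTwo_add_eq_zero_iff {m n R : Type*} [Ring R] [CharP R 2] {A B : Matrix m n R} :
    A + B = 0 ↔ A = B := by
  rw [add_eq_zero_iff_eq_neg, neg_eq_of_add_eq_zero_left (charTwo_add_self_eq_zero B)]

open MvPolynomial

variable {n R σ : Type*} [Fintype n] [DecidableEq n] [CommRing R] [DecidableEq σ]

theorem coeff_matPolyEquiv_mapMatrix_taylorVar (i : σ) (D : Matrix n n (MvPolynomial σ R))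
    (k : ℕ) :
    (matPolyEquiv ((taylorVar i).mapMatrix D)).coeff k =
      D.map fun p => (taylorVar i p).coeff k := by
  ext a b
  simp [matPolyEquiv_coeff_apply]

theorem sum_antidiagonal_taylorVar_coeff_mul_eq_zero {D : Matrix n n (MvPolynomial σ R)}
    (hD : D * D = 0) (i : σ) (k : ℕ) :
    ∑ x ∈ Finset.HasAntidiagonal.antidiagonal k,
      D.map (fun p => (taylorVar i p).coeff x.1) *
        D.map (fun p => (taylorVar i p).coeff x.2) = 0 := by
  have h := congrArg (fun P => P.coeff k)
    (congrArg matPolyEquiv (congrArg (taylorVar (R := R) i).mapMatrix hD))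
  simpa only [map_mul, map_zero, Polynomial.coeff_zero, Polynomial.coeff_mul,
    coeff_matPolyEquiv_mapMatrix_taylorVar] using h

theorem mul_map_pderiv_add_map_pderiv_mul {D : Matrix n n (MvPolynomial σ R)}
    (hD : D * D = 0) (i : σ) :
    D * D.map (pderiv i) + D.map (pderiv i) * D = 0 := by
  simpa [Finset.Nat.sum_antidiagonal_succ, taylorVar_coeff_zero, taylorVar_coeff_one] using
    sum_antidiagonal_taylorVar_coeff_mul_eq_zero hD i 1

/-- The homotopy is minus the coefficient of `t²` in `D(X i + t)`, a divided second derivative. -/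
theorem exists_map_pderiv_mul_self_eq {D : Matrix n n (MvPolynomial σ R)}
    (hD : D * D = 0) (i : σ) :
    ∃ E, D.map (pderiv i) * D.map (pderiv i) = D * E + E * D := by
  refine ⟨-D.map fun p => (taylorVar i p).coeff 2, ?_⟩
  have h := sum_antidiagonal_taylorVar_coeff_mul_eq_zero hD i 2
  simp only [Finset.Nat.sum_antidiagonal_succ, Finset.Nat.antidiagonal_zero, Finset.sum_singleton,
    Nat.reduceAdd, taylorVar_coeff_zero, taylorVar_coeff_one, map_id'] at h
  rw [Matrix.mul_neg, Matrix.neg_mul, ← neg_add, eq_neg_iff_add_eq_zero, ← h]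
  abel

end Matrix

theorem map_UVswap_mul {n : Type*} [Fintype n] (A B : Matrix n n PolyUV) :
    (A * B).map UVswap = A.map UVswap * B.map UVswap :=
  Matrix.map_mul (f := (MvPolynomial.rename (Equiv.swap (0 : Fin 2) 1)).toRingHom)

theorem map_UVswap_add {n : Type*} (A B : Matrix n n PolyUV) :
    (A + B).map UVswap = A.map UVswap + B.map UVswap :=
  Matrix.map_add _ (map_add (MvPolynomial.rename (Equiv.swap (0 : Fin 2) 1))) A B

theorem map_UVswap_map_UVswap {n : Type*} (A : Matrix n n PolyUV) :
    (A.map UVswap).map UVswap = A := by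
  ext a b : 1
  simp only [map_apply, UVswap, MvPolynomial.rename_rename, ← Equiv.coe_trans, Equiv.swap_swap,
    Equiv.coe_refl, MvPolynomial.rename_id_apply]

namespace UVHomotopic

variable {C : UVCx} {f g h f' g' : Matrix C.idx C.idx PolyUV}

theorem refl (f : Matrix C.idx C.idx PolyUV) : UVHomotopic C f f :=
  ⟨0, by simp [Matrix.charTwo_add_self_eq_zero]⟩

theorem symm (hfg : UVHomotopic C f g) : UVHomotopic C g f := by
  rwa [UVHomotopic, add_comm]

theorem trans (hfg : UVHomotopic C f g) (hgh : UVHomotopic C g h) : UVHomotopic C f h := by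
  obtain ⟨H, hH⟩ := hfg
  obtain ⟨H', hH'⟩ := hgh
  refine ⟨H + H', ?_⟩
  calc f + h
    _ = (f + g) + (g + h) := by
      rw [add_assoc, ← add_assoc g g h, Matrix.charTwo_add_self_eq_zero, zero_add]
    _ = C.d * (H + H') + (H + H') * C.d := by rw [hH, hH']; noncomm_ring

instance : Trans (UVHomotopic C) (UVHomotopic C) (UVHomotopic C) := ⟨trans⟩

theorem add (hfg : UVHomotopic C f g) (hfg' : UVHomotopic C f' g') :
    UVHomotopic C (f + f') (g + g') := by
  obtain ⟨H, hH⟩ := hfg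
  obtain ⟨H', hH'⟩ := hfg'
  exact ⟨H + H', by rw [add_add_add_comm, hH, hH']; noncomm_ring⟩

theorem mul_left {a : Matrix C.idx C.idx PolyUV} (ha : a * C.d = C.d * a)
    (hfg : UVHomotopic C f g) : UVHomotopic C (a * f) (a * g) := by
  obtain ⟨H, hH⟩ := hfg
  exact ⟨a * H, by rw [← mul_add, hH, mul_add, ← mul_assoc, ha, mul_assoc, mul_assoc]⟩

theorem mul_right {a : Matrix C.idx C.idx PolyUV} (ha : a * C.d = C.d * a)
    (hfg : UVHomotopic C f g) : UVHomotopic C (f * a) (g * a) := by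
  obtain ⟨H, hH⟩ := hfg
  exact ⟨H * a, by rw [← add_mul, hH, add_mul, mul_assoc, mul_assoc, mul_assoc, ha]⟩

end UVHomotopic

theorem UVSkewHomotopic.mul_map_UVswap {C : UVCx} {f g iota : Matrix C.idx C.idx PolyUV}
    (hchain : iota * C.d.map UVswap = C.d * iota) (hfg : UVSkewHomotopic C f g) :
    UVHomotopic C (iota * f.map UVswap) (iota * g.map UVswap) := by
  obtain ⟨H, hH⟩ := hfg
  refine ⟨iota * H.map UVswap, ?_⟩
  have hswap := congrArg (Matrix.map · UVswap) hH
  simp only [map_UVswap_add, map_UVswap_mul, map_UVswap_map_UVswap] at hswap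
  rw [← mul_add, hswap, mul_add, ← mul_assoc, hchain, mul_assoc, mul_assoc]

namespace UVCx

variable {C : UVCx}

theorem UVPhi_mul_d (hd2 : C.d * C.d = 0) : UVPhi C * C.d = C.d * UVPhi C :=
  (Matrix.charTwo_add_eq_zero_iff.mp (Matrix.mul_map_pderiv_add_map_pderiv_mul hd2 0)).symm

theorem UVPsi_mul_d (hd2 : C.d * C.d = 0) : UVPsi C * C.d = C.d * UVPsi C :=
  (Matrix.charTwo_add_eq_zero_iff.mp (Matrix.mul_map_pderiv_add_map_pderiv_mul hd2 1)).symm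

theorem UVPsi_mul_self_homotopic_zero (hd2 : C.d * C.d = 0) :
    UVHomotopic C (UVPsi C * UVPsi C) 0 := by
  obtain ⟨E, hE⟩ := Matrix.exists_map_pderiv_mul_self_eq hd2 1
  exact ⟨E, by rw [add_zero]; exact hE⟩

end UVCx

theorem Psi_homotopic_iota_Phi_iota_general (C : UVCx)
    (hd2 : C.d * C.d = 0)
    (iota : Matrix C.idx C.idx PolyUV)
    (hchain : iota * C.d.map UVswap = C.d * iota)
    (hPhiIota : UVSkewHomotopic C (UVPhi C * iota) (iota * (UVPsi C).map UVswap))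
    (hIotaSq : UVHomotopic C (iota * iota.map UVswap) (1 + UVPhi C * UVPsi C)) :
    UVHomotopic C (UVPsi C) (iota * (UVPhi C * iota).map UVswap) := by
  have hΦ := UVCx.UVPhi_mul_d hd2
  have hΨ := UVCx.UVPsi_mul_d hd2
  refine UVHomotopic.symm ?_
  calc iota * (UVPhi C * iota).map UVswap
    UVHomotopic C _ (iota * (iota * (UVPsi C).map UVswap).map UVswap) :=
      hPhiIota.mul_map_UVswap hchain
    _ = iota * iota.map UVswap * UVPsi C := by
      rw [map_UVswap_mul, map_UVswap_map_UVswap, mul_assoc]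
    UVHomotopic C _ ((1 + UVPhi C * UVPsi C) * UVPsi C) := hIotaSq.mul_right hΨ
    _ = UVPsi C + UVPhi C * (UVPsi C * UVPsi C) := by rw [add_mul, one_mul, mul_assoc]
    UVHomotopic C _ (UVPsi C + UVPhi C * 0) :=
      (UVHomotopic.refl _).add ((UVCx.UVPsi_mul_self_homotopic_zero hd2).mul_left hΦ)
    _ = UVPsi C := by rw [mul_zero, add_zero]

/-- Let `C` be a bigraded chain complex of finitely
generated free `F₂[U,V]`-modules and let `ι : C → C` be a skew-graded,
`F₂[U,V]`-skew-linear chain homotopy equivalence.  If `Φι ≃ ιΨ` and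
`ι² ≃ id + ΦΨ` up to chain homotopy, then `Ψ ≃ ιΦι` up to chain homotopy.
(In matrix form, the composite `ιΦι` of the skew-linear map `ι` with the
linear map `Φ` and `ι` again is the linear map `ι · (Φ·ι)^{swap}`.) -/
theorem Psi_homotopic_iota_Phi_iota (C : UVCx)
    (hd2 : C.d * C.d = 0) (hdgr : UVGraded C (0, -1) C.d)
    (iota : Matrix C.idx C.idx PolyUV)
    (hskew : UVSkewGraded C iota)
    (hchain : iota * C.d.map UVswap = C.d * iota)
    (hequiv : ∃ kappa : Matrix C.idx C.idx PolyUV,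
      kappa * C.d.map UVswap = C.d * kappa ∧
      UVHomotopic C (iota * kappa.map UVswap) 1 ∧
      UVHomotopic C (kappa * iota.map UVswap) 1)
    (hPhiIota : UVSkewHomotopic C (UVPhi C * iota) (iota * (UVPsi C).map UVswap))
    (hIotaSq : UVHomotopic C (iota * iota.map UVswap) (1 + UVPhi C * UVPsi C)) :
    UVHomotopic C (UVPsi C) (iota * (UVPhi C * iota).map UVswap) :=
  Psi_homotopic_iota_Phi_iota_general C hd2 iota hchain hPhiIota hIotaSq
end
end

section
/- Let C be a bigraded chain complex of finitely generated free modules over F₂[U] with F₂[U]-linear differential ∂ satisfying ∂² = 0, and let Φ be the formal derivative of ∂ with respect to U computed in a chosen F₂[U]-basis. Then Φ commutes with ∂ (so Φ is a chain map), and Φ² is chain homotopic to 0. -/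
/-!
Algebraic model for horizontal almost `ι_K`-complexes (Kang–Park,
"Torsion in the knot concordance group and cabling").

Conventions.  We work over `F₂ = ℤ/2`.  A bigraded chain complex of finitely
generated free `F₂[U]`-modules is presented by a finite homogeneous basis
`idx`, a bidegree function `gr : idx → ℤ × ℤ` (Alexander and Maslov gradings),
and a differential matrix `d` over `F₂[U]` (the `j`-th basis vector is sent to
`∑ i, d i j • eᵢ`; matrix multiplication is composition).  The variable `U`
has bidegree `(−1, −2)` and the differential has bidegree `(0, −1)`.
-/

open Polynomial Matrix Kronecker

noncomputable section

/-!
Differentiating `∂ ∂ = 0` by the Leibniz rule gives `Φ ∂ + ∂ Φ = 0`. Applying instead the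
second Hasse derivative `D₂` (morally `∂''/2`, but defined over any ring), whose Leibniz rule
reads `D₂(fg) = D₂f · g + f' · g' + f · D₂g`, gives `D₂∂ · ∂ + Φ² + ∂ · D₂∂ = 0`. Over `F₂` signs
disappear, so `Φ` is a chain map and `D₂∂` is a null-homotopy of `Φ²`.
-/

namespace Matrix

open Finset

variable {R : Type*} [CommSemiring R] {l m n : Type*} [Fintype m]

theorem map_hasseDeriv_mul (k : ℕ) (A : Matrix l m R[X]) (B : Matrix m n R[X]) :
    (A * B).map (hasseDeriv k) =
      ∑ ij ∈ antidiagonal k,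
        (A.map (hasseDeriv ij.1) * B.map (hasseDeriv ij.2) : Matrix l n R[X]) := by
  ext i j : 1
  simp only [map_apply, mul_apply, map_sum, hasseDeriv_mul, sum_apply]
  exact Finset.sum_comm

theorem map_derivative_mul (A : Matrix l m R[X]) (B : Matrix m n R[X]) :
    (A * B).map derivative = A.map derivative * B + A * B.map derivative := by
  simpa [Finset.Nat.antidiagonal_succ, hasseDeriv_one', add_comm] using map_hasseDeriv_mul 1 A B

theorem map_hasseDeriv_two_mul (A : Matrix l m R[X]) (B : Matrix m n R[X]) :
    (A * B).map (hasseDeriv 2) =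
      A.map (hasseDeriv 2) * B + A.map derivative * B.map derivative +
        A * B.map (hasseDeriv 2) := by
  simp [map_hasseDeriv_mul, Finset.Nat.antidiagonal_succ, add_comm]

end Matrix

theorem ZModModule.eq_of_add_eq_zero {G : Type*} [AddCommGroup G] [Module (ZMod 2) G]
    {x y : G} (h : x + y = 0) : x = y :=
  sub_eq_zero.mp ((ZModModule.sub_eq_add x y).trans h)

theorem CxData.Phi_eq_map_derivative (C : CxData) : C.Phi = C.d.map derivative := rfl

/-- Let `C` be a bigraded chain complex of finitely
generated free `F₂[U]`-modules with `∂² = 0`, and let `Φ` be the formal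
derivative of `∂` with respect to `U`, computed entrywise in the chosen
basis.  Then `Φ` commutes with `∂` (so `Φ` is a chain map), and `Φ²` is
chain homotopic to `0`. -/
theorem Phi_chain_map_and_sq_nullhomotopic (C : CxData) (hC : C.IsComplex) :
    C.Phi * C.d = C.d * C.Phi ∧ Homotopic C C (C.Phi * C.Phi) 0 := by
  have hΦ := C.d.map_derivative_mul C.d
  have hH := C.d.map_hasseDeriv_two_mul C.d
  rw [hC.1, Matrix.map_zero _ (map_zero _)] at hΦ hH
  rw [C.Phi_eq_map_derivative]
  refine ⟨ZModModule.eq_of_add_eq_zero hΦ.symm, C.d.map (hasseDeriv 2), ?_⟩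
  exact ZModModule.eq_of_add_eq_zero (Eq.trans (by abel) hH.symm)

end
end
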